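/- Define π₋⁻¹(q) = (q₂/√(2(d−q₁)), √((d−q₁)/2), 0, q₃/√(2(d−q₁))) for q = (q₁,q₂,q₃) ∈ ℝ³ with d = ‖q‖ and q not on the non-negative q₁-axis (so d − q₁ > 0). Then π(π₋⁻¹(q)) = q, and moreover for any p̄ ∈ ℝ³, the momentum U = 2A(π₋⁻¹(q))ᵀ(p̄,0) satisfies the bilinear constraint l(π₋⁻¹(q), U) = 0. -/

import Mathlib

open Matrix

noncomputable def ksA (u : Fin 4 → ℝ) : Matrix (Fin 4) (Fin 4) ℝ :=
  !![u 0, -u 1, -u 2, u 3;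
     u 1, u 0, -u 3, -u 2;
     u 2, u 3, u 0, u 1;
     u 3, -u 2, u 1, -u 0]

noncomputable def ksPi (u : Fin 4 → ℝ) : Fin 3 → ℝ :=
  ![u 0 ^ 2 - u 1 ^ 2 - u 2 ^ 2 + u 3 ^ 2,
    2 * u 0 * u 1 - 2 * u 2 * u 3,
    2 * u 2 * u 0 + 2 * u 3 * u 1]

/-- KS bilinear form. -/
noncomputable def ksL (u v : Fin 4 → ℝ) : ℝ :=
  u 3 * v 0 - u 2 * v 1 + u 1 * v 2 - u 0 * v 3

/-- The local inverse `π₋⁻¹` of the KS projection. -/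
noncomputable def ksPiInvMinus (q : Fin 3 → ℝ) : Fin 4 → ℝ :=
  let d := Real.sqrt (q 0 ^ 2 + q 1 ^ 2 + q 2 ^ 2)
  ![q 1 / Real.sqrt (2 * (d - q 0)),
    Real.sqrt ((d - q 0) / 2),
    0,
    q 2 / Real.sqrt (2 * (d - q 0))]

/-- `π₋⁻¹` is a local right inverse of `π` away from the non-negative
`q₁`-axis, and the lifted momentum `U = 2A(π₋⁻¹(q))ᵀ(p̄,0)` satisfies the
bilinear constraint `l(π₋⁻¹(q),U) = 0`. -/
theorem ksPi_invMinus_right_inverse (q : Fin 3 → ℝ)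
    (hq : 0 < Real.sqrt (q 0 ^ 2 + q 1 ^ 2 + q 2 ^ 2) - q 0) :
    ksPi (ksPiInvMinus q) = q ∧
    ∀ p : Fin 3 → ℝ,
      ksL (ksPiInvMinus q)
        ((2 : ℝ) • ((ksA (ksPiInvMinus q))ᵀ.mulVec ![p 0, p 1, p 2, 0])) = 0 := by
  set d := Real.sqrt (q 0 ^ 2 + q 1 ^ 2 + q 2 ^ 2) with hd
  have hd2 : d ^ 2 = q 0 ^ 2 + q 1 ^ 2 + q 2 ^ 2 := by
    rw [hd]
    exact Real.sq_sqrt (by positivity)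
  have hs : (0:ℝ) < 2 * (d - q 0) := by linarith
  have hs' : Real.sqrt (2 * (d - q 0)) ^ 2 = 2 * (d - q 0) :=
    Real.sq_sqrt hs.le
  have hs0 : Real.sqrt (2 * (d - q 0)) ≠ 0 := by positivity
  have h4 : Real.sqrt 4 = 2 := by
    rw [show (4:ℝ) = 2 ^ 2 by norm_num, Real.sqrt_sq (by norm_num : (0:ℝ) ≤ 2)]
  have h12 : Real.sqrt ((d - q 0) / 2) = Real.sqrt (2 * (d - q 0)) / 2 := by
    rw [show (d - q 0) / 2 = 2 * (d - q 0) / 4 by ring, Real.sqrt_div hs.le, h4]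
  have h2 : (Real.sqrt 2 * Real.sqrt (d - q 0)) ^ 2 = 2 * (d - q 0) := by
    rw [mul_pow, Real.sq_sqrt (by norm_num : (0:ℝ) ≤ 2), Real.sq_sqrt (by linarith)]
  constructor
  · funext i
    fin_cases i <;>
      simp only [ksPi, ksPiInvMinus, ← hd, h12, Matrix.cons_val_zero,
        Matrix.cons_val_one, Matrix.head_cons, Matrix.cons_val_two, Matrix.tail_cons,
        Matrix.cons_val_three, Fin.zero_eta, Fin.mk_one, Fin.reduceFinMk]
    · field_simp
      linear_combination (-(Real.sqrt (2 * (d - q 0)) ^ 2 + 2 * (d - q 0)) - 4 * q 0) * hs'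
        - 4 * hd2
    · field_simp
      ring
    · show 2 * 0 * _ + 2 * (q 2 / Real.sqrt (2 * (d - q 0)))
          * (Real.sqrt (2 * (d - q 0)) / 2) = q 2
      field_simp
      ring
  · intro p
    simp only [ksL, ksA, ksPiInvMinus, ← hd, Matrix.mulVec, Matrix.transpose_apply,
      Pi.smul_apply, smul_eq_mul, dotProduct, Fin.sum_univ_four,
      Matrix.cons_val', Matrix.cons_val_zero, Matrix.cons_val_one, Matrix.head_cons,
      Matrix.cons_val_two, Matrix.tail_cons, Matrix.cons_val_three, Matrix.empty_val',
      Matrix.cons_val_fin_one, Matrix.head_fin_const, Matrix.of_apply]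
    ring
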